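/- For all i ≥ 1, the Fibonacci polynomial F_i(x) equals the sum over j from 0 to i, restricted to indices j with i + j odd, of ((i+j-1)/2)! / (j! · ((i-j-1)/2)!) · x^j. -/

import Mathlib

noncomputable def fibPoly : ℕ → Polynomial ℝ
  | 0 => 0
  | 1 => 1
  | n + 2 => Polynomial.X * fibPoly (n + 1) + fibPoly n

open Polynomial

theorem fibPoly_add_two (n : ℕ) : fibPoly (n + 2) = X * fibPoly (n + 1) + fibPoly n := by
  rw [fibPoly]

theorem choose_half_eq_zero_of_le {n j : ℕ} (hodd : Odd (n + j)) (hnj : n ≤ j) :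
    ((n + j - 1) / 2).choose j = 0 :=
  Nat.choose_eq_zero_of_lt (by rcases hodd with ⟨k, hk⟩; omega)

/- The coefficients satisfy Pascal's rule along the recurrence: with `s = (n + j + 2) / 2`,
`coeff (n + 2) (j + 1) = coeff (n + 1) j + coeff n (j + 1)` reads `C(s, j+1) = C(s-1, j) + C(s-1, j+1)`. -/
theorem coeff_fibPoly (n j : ℕ) :
    (fibPoly n).coeff j = if Odd (n + j) then (((n + j - 1) / 2).choose j : ℝ) else 0 := by
  induction n using Nat.twoStepInduction generalizing j with
  | zero =>
    split_ifs with h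
    · rw [choose_half_eq_zero_of_le h (Nat.zero_le j)]; simp [fibPoly]
    · simp [fibPoly]
  | one =>
    cases j with
    | zero => simp [fibPoly]
    | succ j =>
      split_ifs with h
      · rw [choose_half_eq_zero_of_le h (by omega)]; simp [fibPoly, coeff_one]
      · simp [fibPoly, coeff_one]
  | more n ih₀ ih₁ =>
    have hodd : Odd (n + 2 + j) ↔ Odd (n + j) := by
      rw [show n + 2 + j = n + j + 2 by omega, Nat.odd_add, Nat.odd_add]
      simp
    cases j with
    | zero => simp [fibPoly_add_two, ih₀, hodd]
    | succ j =>
      rw [fibPoly_add_two, coeff_add, coeff_X_mul, ih₀, ih₁, show n + 1 + j = n + (j + 1) by omega]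
      simp only [hodd]
      split_ifs with h
      · rw [show (n + 2 + (j + 1) - 1) / 2 = (n + (j + 1) - 1) / 2 + 1 by omega,
          Nat.choose_succ_succ', Nat.cast_add]
      · simp

theorem natDegree_fibPoly_le (n : ℕ) : (fibPoly n).natDegree ≤ n := by
  refine natDegree_le_iff_coeff_eq_zero.mpr fun j hj => ?_
  rw [coeff_fibPoly]
  split_ifs with h
  · exact_mod_cast choose_half_eq_zero_of_le h hj.le
  · rfl

theorem fibPoly_factorial_form_general (i : ℕ) (x : ℝ) :
    (fibPoly i).eval x =
      ∑ j ∈ (Finset.range (i + 1)).filter (fun j => Odd (i + j)),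
        ((Nat.factorial ((i + j - 1) / 2) : ℝ) /
          ((Nat.factorial j : ℝ) * (Nat.factorial ((i - j - 1) / 2) : ℝ))) * x ^ j := by
  rw [eval_eq_sum_range' (Nat.lt_succ_of_le (natDegree_fibPoly_le i)), Finset.sum_filter]
  refine Finset.sum_congr rfl fun j hj => ?_
  rw [coeff_fibPoly]
  split_ifs with hodd
  · have hji : j < i := by
      rw [Finset.mem_range] at hj; have := Nat.odd_iff.mp hodd; omega
    rw [Nat.cast_choose ℝ (by omega), show (i + j - 1) / 2 - j = (i - j - 1) / 2 by omega]
  · simp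

theorem fibPoly_factorial_form (i : ℕ) (hi : 1 ≤ i) (x : ℝ) :
    (fibPoly i).eval x =
      ∑ j ∈ (Finset.range (i + 1)).filter (fun j => Odd (i + j)),
        ((Nat.factorial ((i + j - 1) / 2) : ℝ) /
          ((Nat.factorial j : ℝ) * (Nat.factorial ((i - j - 1) / 2) : ℝ))) * x ^ j :=
  fibPoly_factorial_form_general i x
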